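/- arXiv:0802.0474 — 3 statements merged into one kernel-verified Lean document; each statement's English description precedes it below -/
import Mathlib

section
/- For every z > 0 and ν ≥ -1/2, the modified Bessel function satisfies Soni's inequality I_{ν+1}(z) < I_ν(z). -/
noncomputable def besselI (ν z : ℝ) : ℝ :=
  ∑' k : ℕ, (z / 2) ^ (ν + 2 * (k : ℝ)) / (Real.Gamma (k + 1) * Real.Gamma (k + ν + 1))

/-! Write `x = z / 2` and let `𝒞_μ(t) = ∑ tᵏ / (k! Γ(k + μ + 1))` be the Bessel–Clifford function,
so that `I_μ(z) = x^μ 𝒞_μ(x²)` and the claim becomes `x 𝒞_{ν+1}(x²) < 𝒞_ν(x²)`.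
Since `𝒞_μ' = 𝒞_{μ+1}` and `𝒞_μ = (μ + 1) 𝒞_{μ+1} + t 𝒞_{μ+2}`, the function
`exp (2x) (𝒞_ν(x²) - x 𝒞_{ν+1}(x²))` has derivative `(2ν + 1) exp (2x) 𝒞_{ν+1}(x²) ≥ 0`,
so for `x ≥ 0` it is at least its value `1 / Γ(ν + 1) > 0` at `x = 0`. -/

open Real

theorem hasDerivAt_tsum_mul_pow {c : ℕ → ℝ} (hc : ∀ r, Summable fun k => c k * r ^ k) (x : ℝ) :
    HasDerivAt (fun y => ∑' k, c k * y ^ k) (∑' k, (k + 1) * c (k + 1) * x ^ k) x := by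
  set R := |x| + 1
  have hR : 1 ≤ R := le_add_of_nonneg_left (abs_nonneg x)
  have hu : Summable fun k => |c k| * (2 * R) ^ k := by
    have h2R : 0 ≤ 2 * R := by positivity
    simpa only [abs_mul, abs_pow, abs_of_nonneg h2R] using (hc (2 * R)).abs
  have hbound : ∀ k, ∀ y ∈ Metric.ball (0 : ℝ) R,
      ‖c k * (k * y ^ (k - 1))‖ ≤ |c k| * (2 * R) ^ k := by
    intro k y hy
    have hyR : |y| ≤ R := by simpa using (mem_ball_zero_iff.mp hy).le
    rw [norm_mul, norm_mul, norm_pow, Real.norm_natCast, Real.norm_eq_abs, Real.norm_eq_abs]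
    gcongr
    calc (k : ℝ) * |y| ^ (k - 1) ≤ 2 ^ k * R ^ k := by
          gcongr
          · exact_mod_cast Nat.lt_two_pow_self.le
          · exact (pow_le_pow_left₀ (abs_nonneg y) hyR _).trans (pow_le_pow_right₀ hR (k.sub_le 1))
      _ = (2 * R) ^ k := (mul_pow 2 R k).symm
  have hx : x ∈ Metric.ball (0 : ℝ) R := by simp [R]
  have hderiv := hasDerivAt_tsum_of_isPreconnected hu Metric.isOpen_ball
    (convex_ball (0 : ℝ) R).isPreconnected (fun k y _ => (hasDerivAt_pow k y).const_mul (c k))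
    hbound (Metric.mem_ball_self (by linarith)) (hc 0) hx
  refine hderiv.congr_deriv ?_
  rw [(hu.of_norm_bounded fun k => hbound k x hx).tsum_eq_zero_add]
  simp only [CharP.cast_eq_zero, zero_mul, mul_zero, zero_add, Nat.cast_add, Nat.cast_one,
    add_tsub_cancel_right]
  exact tsum_congr fun k => by ring

noncomputable def besselCliffordCoeff (μ : ℝ) (k : ℕ) : ℝ :=
  1 / (Gamma (k + 1) * Gamma (k + μ + 1))

noncomputable def besselClifford (μ t : ℝ) : ℝ :=
  ∑' k, besselCliffordCoeff μ k * t ^ k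

lemma besselCliffordCoeff_pos {μ : ℝ} (hμ : -1 < μ) (k : ℕ) : 0 < besselCliffordCoeff μ k := by
  have h1 := Gamma_pos_of_pos (by positivity : (0 : ℝ) < k + 1)
  have h2 := Gamma_pos_of_pos (by linarith [k.cast_nonneg (α := ℝ)] : (0 : ℝ) < k + μ + 1)
  unfold besselCliffordCoeff
  positivity

lemma succ_mul_besselCliffordCoeff_succ (μ : ℝ) (k : ℕ) :
    (k + 1) * besselCliffordCoeff μ (k + 1) = besselCliffordCoeff (μ + 1) k := by
  have hk : (k : ℝ) + 1 ≠ 0 := by positivity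
  unfold besselCliffordCoeff
  rw [Nat.cast_succ, Gamma_add_one hk, show (k : ℝ) + 1 + μ + 1 = k + (μ + 1) + 1 by ring]
  field_simp

/-- Also where `k + μ + 1 = 0`: there both sides vanish, as `Gamma 0 = 0`. -/
lemma besselCliffordCoeff_eq_mul (μ : ℝ) (k : ℕ) :
    besselCliffordCoeff μ k = (k + μ + 1) * besselCliffordCoeff (μ + 1) k := by
  unfold besselCliffordCoeff
  rcases eq_or_ne ((k : ℝ) + μ + 1) 0 with h | h
  · simp [h]
  · rw [← add_assoc, Gamma_add_one h]
    field_simp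

lemma summable_besselCliffordCoeff_mul_pow (μ t : ℝ) :
    Summable fun k => besselCliffordCoeff μ k * t ^ k := by
  refine summable_of_ratio_norm_eventually_le (r := 1 / 2) (by norm_num) ?_
  filter_upwards [Filter.eventually_ge_atTop ⌈2 * |t| + |μ|⌉₊] with k hk
  have hk : 2 * |t| + |μ| ≤ k := Nat.ceil_le.mp hk
  have hratio : besselCliffordCoeff μ k
      = (k + 1) * (k + μ + 1) * besselCliffordCoeff μ (k + 1) := by
    rw [besselCliffordCoeff_eq_mul, ← succ_mul_besselCliffordCoeff_succ]
    ring
  have hμ1 : 1 ≤ (k : ℝ) + μ + 1 := by linarith [neg_abs_le μ, abs_nonneg t]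
  have ht : 2 * |t| ≤ (k + 1) * (k + μ + 1) := by nlinarith [abs_nonneg μ]
  simp only [Real.norm_eq_abs, hratio, abs_mul, abs_pow]
  rw [pow_succ, abs_of_pos (by positivity : (0 : ℝ) < k + 1),
    abs_of_pos (by linarith : (0 : ℝ) < k + μ + 1)]
  have := mul_nonneg (abs_nonneg (besselCliffordCoeff μ (k + 1))) (pow_nonneg (abs_nonneg t) k)
  nlinarith

theorem hasDerivAt_besselClifford (μ t : ℝ) :
    HasDerivAt (besselClifford μ) (besselClifford (μ + 1) t) t := by
  have h := hasDerivAt_tsum_mul_pow (summable_besselCliffordCoeff_mul_pow μ) t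
  simp only [succ_mul_besselCliffordCoeff_succ] at h
  exact h

theorem besselClifford_eq_add (μ t : ℝ) :
    besselClifford μ t = (μ + 1) * besselClifford (μ + 1) t + t * besselClifford (μ + 2) t := by
  have hterm (k : ℕ) : besselCliffordCoeff μ k * t ^ k
      - (μ + 1) * (besselCliffordCoeff (μ + 1) k * t ^ k)
      = k * besselCliffordCoeff (μ + 1) k * t ^ k := by
    rw [besselCliffordCoeff_eq_mul]
    ring
  have hsum : Summable fun k : ℕ => k * besselCliffordCoeff (μ + 1) k * t ^ k := by
    simpa only [hterm] using (summable_besselCliffordCoeff_mul_pow μ t).sub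
      ((summable_besselCliffordCoeff_mul_pow (μ + 1) t).mul_left (μ + 1))
  have hshift : ∑' k : ℕ, k * besselCliffordCoeff (μ + 1) k * t ^ k
      = t * besselClifford (μ + 2) t := by
    rw [hsum.tsum_eq_zero_add, besselClifford, ← tsum_mul_left]
    simp only [CharP.cast_eq_zero, zero_mul, zero_add]
    refine tsum_congr fun k => ?_
    rw [show μ + 2 = μ + 1 + 1 by ring, ← succ_mul_besselCliffordCoeff_succ (μ + 1) k]
    push_cast
    ring
  rw [← hshift, besselClifford, besselClifford, ← tsum_mul_left, ← tsum_congr hterm,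
    (summable_besselCliffordCoeff_mul_pow μ t).tsum_sub
      ((summable_besselCliffordCoeff_mul_pow (μ + 1) t).mul_left (μ + 1))]
  ring

lemma besselClifford_pos {μ t : ℝ} (hμ : -1 < μ) (ht : 0 ≤ t) : 0 < besselClifford μ t :=
  (summable_besselCliffordCoeff_mul_pow μ t).tsum_pos
    (fun k => mul_nonneg (besselCliffordCoeff_pos hμ k).le (pow_nonneg ht k)) 0
    (by simpa using besselCliffordCoeff_pos hμ 0)

lemma besselI_eq_rpow_mul_besselClifford (μ : ℝ) {z : ℝ} (hz : 0 < z) :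
    besselI μ z = (z / 2) ^ μ * besselClifford μ ((z / 2) ^ 2) := by
  have hx : 0 < z / 2 := by positivity
  rw [besselI, besselClifford, ← tsum_mul_left]
  refine tsum_congr fun k => ?_
  rw [rpow_add hx, ← pow_mul, ← rpow_natCast, besselCliffordCoeff]
  push_cast
  ring

lemma hasDerivAt_exp_mul_besselClifford_sub (ν x : ℝ) :
    HasDerivAt
      (fun y => exp (2 * y) * (besselClifford ν (y ^ 2) - y * besselClifford (ν + 1) (y ^ 2)))
      (exp (2 * x) * ((2 * ν + 1) * besselClifford (ν + 1) (x ^ 2))) x := by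
  have hsq : HasDerivAt (fun y : ℝ => y ^ 2) (2 * x) x := by simpa using hasDerivAt_pow 2 x
  have hexp : HasDerivAt (fun y => exp (2 * y)) (exp (2 * x) * 2) x := by
    simpa using ((hasDerivAt_id x).const_mul 2).exp
  have h0 := (hasDerivAt_besselClifford ν (x ^ 2)).comp x hsq
  have h1 := (hasDerivAt_besselClifford (ν + 1) (x ^ 2)).comp x hsq
  refine (hexp.mul (h0.sub ((hasDerivAt_id x).mul h1))).congr_deriv ?_
  simp only [Pi.sub_apply, Pi.mul_apply, Function.comp_apply, id]
  rw [besselClifford_eq_add ν (x ^ 2), show ν + 1 + 1 = ν + 2 by ring]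
  ring

theorem mul_besselClifford_succ_lt {ν x : ℝ} (hν : -1 / 2 ≤ ν) (hx : 0 ≤ x) :
    x * besselClifford (ν + 1) (x ^ 2) < besselClifford ν (x ^ 2) := by
  have hmono := monotone_of_hasDerivAt_nonneg (hasDerivAt_exp_mul_besselClifford_sub ν) fun y =>
    mul_nonneg (exp_pos _).le (mul_nonneg (by linarith)
      (besselClifford_pos (by linarith) (sq_nonneg y)).le)
  have h : besselClifford ν 0
      ≤ exp (2 * x) * (besselClifford ν (x ^ 2) - x * besselClifford (ν + 1) (x ^ 2)) := by
    simpa using hmono hx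
  have h0 : 0 < besselClifford ν 0 := besselClifford_pos (by linarith) le_rfl
  nlinarith [exp_pos (2 * x)]

theorem soni_inequality (ν z : ℝ) (hν : -1/2 ≤ ν) (hz : 0 < z) :
    besselI (ν + 1) z < besselI ν z := by
  have hx : 0 < z / 2 := by positivity
  rw [besselI_eq_rpow_mul_besselClifford ν hz, besselI_eq_rpow_mul_besselClifford (ν + 1) hz,
    rpow_add_one hx.ne', mul_assoc]
  exact mul_lt_mul_of_pos_left (mul_besselClifford_succ_lt hν hx.le) (rpow_pos_of_pos hx ν)
end

section
/- For ν > -1/2 and z > 0, the modified Bessel function admits the Schläfli–Poisson integral representation I_ν(z) = z^ν ∫_{-1}^{1} e^{-zs} (1-s^2)^{ν-1/2} ds / (√π 2^ν Γ(ν+1/2)). -/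
open MeasureTheory Set Real intervalIntegral Nat

lemma ofReal_rpow_mul_one_sub_rpow {t : ℝ} (ht : t ∈ Icc (0 : ℝ) 1) (a b : ℝ) :
    ((t ^ (a - 1) * (1 - t) ^ (b - 1) : ℝ) : ℂ) =
      (t : ℂ) ^ ((a : ℂ) - 1) * (1 - (t : ℂ)) ^ ((b : ℂ) - 1) := by
  rw [Complex.ofReal_mul, Complex.ofReal_cpow ht.1, Complex.ofReal_cpow (sub_nonneg.2 ht.2)]
  push_cast
  rfl

lemma intervalIntegrable_rpow_mul_one_sub_rpow {a b : ℝ} (ha : 0 < a) (hb : 0 < b) :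
    IntervalIntegrable (fun t : ℝ => t ^ (a - 1) * (1 - t) ^ (b - 1)) volume 0 1 := by
  have hc := Complex.betaIntegral_convergent (u := a) (v := b) (by simpa) (by simpa)
  rw [intervalIntegrable_iff, uIoc_of_le zero_le_one] at hc ⊢
  refine IntegrableOn.congr_fun hc.re (fun t ht => ?_) measurableSet_Ioc
  rw [← ofReal_rpow_mul_one_sub_rpow (Ioc_subset_Icc_self ht), RCLike.re_to_complex,
    Complex.ofReal_re]

lemma integral_rpow_mul_one_sub_rpow {a b : ℝ} (ha : 0 < a) (hb : 0 < b) :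
    ∫ t in (0 : ℝ)..1, t ^ (a - 1) * (1 - t) ^ (b - 1) = Gamma a * Gamma b / Gamma (a + b) := by
  have h := Complex.Gamma_mul_Gamma_eq_betaIntegral (s := a) (t := b) (by simpa) (by simpa)
  rw [Complex.betaIntegral, ← integral_congr fun t ht => ofReal_rpow_mul_one_sub_rpow
    (by rwa [uIcc_of_le zero_le_one] at ht) a b, integral_ofReal, ← Complex.ofReal_add,
    Complex.Gamma_ofReal, Complex.Gamma_ofReal, Complex.Gamma_ofReal] at h
  rw [eq_div_iff (Gamma_pos_of_pos (add_pos ha hb)).ne', mul_comm]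
  exact_mod_cast h.symm

section Substitution

variable {E : Type*} [NormedAddCommGroup E] [NormedSpace ℝ E] {a : ℝ}

lemma image_sq_Ioc_zero (ha : 0 ≤ a) : (fun x : ℝ => x ^ 2) '' Ioc 0 a = Ioc 0 (a ^ 2) := by
  simpa using (continuous_pow 2).continuousOn.image_Ioc_of_strictMonoOn ha
    ((pow_left_strictMonoOn₀ two_ne_zero).mono fun x hx => hx.1)

lemma injOn_sq_Ioc_zero : InjOn (fun x : ℝ => x ^ 2) (Ioc 0 a) :=
  (pow_left_strictMonoOn₀ two_ne_zero).injOn.mono fun _ hx => le_of_lt hx.1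

lemma hasDerivWithinAt_sq (s : Set ℝ) (x : ℝ) :
    HasDerivWithinAt (fun x : ℝ => x ^ 2) (2 * x) s x := by
  simpa using (hasDerivAt_pow 2 x).hasDerivWithinAt

lemma abs_two_mul_smul_eqOn (g : ℝ → E) :
    EqOn (fun x => |2 * x| • g (x ^ 2)) (fun x => (2 * x) • g (x ^ 2)) (Ioc 0 a) := fun x hx => by
  simp only [abs_of_pos (mul_pos two_pos hx.1)]

lemma intervalIntegrable_two_mul_smul_comp_sq_iff (ha : 0 ≤ a) (g : ℝ → E) :
    IntervalIntegrable (fun x => (2 * x) • g (x ^ 2)) volume 0 a ↔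
      IntervalIntegrable g volume 0 (a ^ 2) := by
  rw [intervalIntegrable_iff_integrableOn_Ioc_of_le ha,
    intervalIntegrable_iff_integrableOn_Ioc_of_le (sq_nonneg a), ← image_sq_Ioc_zero ha,
    integrableOn_image_iff_integrableOn_abs_deriv_smul measurableSet_Ioc
      (fun x _ => hasDerivWithinAt_sq _ x) injOn_sq_Ioc_zero]
  exact integrableOn_congr_fun (abs_two_mul_smul_eqOn g) measurableSet_Ioc |>.symm

lemma integral_two_mul_smul_comp_sq (ha : 0 ≤ a) (g : ℝ → E) :
    ∫ x in 0..a, (2 * x) • g (x ^ 2) = ∫ t in 0..a ^ 2, g t := by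
  rw [integral_of_le ha, integral_of_le (sq_nonneg a), ← image_sq_Ioc_zero ha,
    integral_image_eq_integral_abs_deriv_smul measurableSet_Ioc
      (fun x _ => hasDerivWithinAt_sq _ x) injOn_sq_Ioc_zero]
  exact setIntegral_congr_fun measurableSet_Ioc (abs_two_mul_smul_eqOn g) |>.symm

end Substitution

section Parity

variable {E : Type*} [NormedAddCommGroup E] {f : ℝ → E} {a : ℝ}

lemma IntervalIntegrable.neg_self_of_even (hf : ∀ x, f (-x) = f x)
    (hint : IntervalIntegrable f volume 0 a) : IntervalIntegrable f volume (-a) 0 := by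
  simpa [hf] using (IntervalIntegrable.iff_comp_neg (f := f)).1 hint.symm

variable [NormedSpace ℝ E]

lemma integral_neg_self_eq_two_smul_of_even (hf : ∀ x, f (-x) = f x)
    (hint : IntervalIntegrable f volume 0 a) : ∫ x in -a..a, f x = (2 : ℝ) • ∫ x in 0..a, f x := by
  rw [← integral_add_adjacent_intervals (hint.neg_self_of_even hf) hint, two_smul]
  congr 1
  simpa [hf] using (integral_comp_neg (a := 0) (b := a) f).symm

lemma integral_neg_self_eq_zero_of_odd (hf : ∀ x, f (-x) = -f x) : ∫ x in -a..a, f x = 0 := by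
  have h := integral_comp_neg (a := -a) (b := a) f
  simp only [hf, intervalIntegral.integral_neg, neg_neg] at h
  have h2 : (2 : ℝ) • ∫ x in -a..a, f x = 0 := by
    rw [two_smul]
    nth_rewrite 1 [← h]
    exact neg_add_cancel _
  exact (smul_eq_zero.1 h2).resolve_left two_ne_zero

end Parity

lemma pow_mul_one_sub_sq_rpow_eq {x : ℝ} (hx : 0 < x) (m : ℕ) (ν : ℝ) :
    x ^ (2 * m) * (1 - x ^ 2) ^ (ν - 1/2) =
      2⁻¹ * ((2 * x) * ((x ^ 2) ^ ((m : ℝ) + 1/2 - 1) * (1 - x ^ 2) ^ (ν + 1/2 - 1))) := by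
  have hsq : (x ^ 2) ^ ((m : ℝ) + 1/2 - 1) = x ^ (2 * m) / x := by
    rw [show (m : ℝ) + 1/2 - 1 = m + -(1/2) by ring, rpow_add (by positivity), rpow_natCast,
      ← pow_mul, rpow_neg (sq_nonneg x), ← sqrt_eq_rpow, sqrt_sq hx.le, div_eq_mul_inv]
  rw [hsq, show ν + 1/2 - 1 = ν - 1/2 by ring]
  field_simp

section Moments

variable {ν : ℝ}

lemma intervalIntegrable_pow_mul_one_sub_sq_rpow (hν : -1/2 < ν) (m : ℕ) :
    IntervalIntegrable (fun s : ℝ => s ^ (2 * m) * (1 - s ^ 2) ^ (ν - 1/2)) volume 0 1 := by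
  have hbeta := intervalIntegrable_rpow_mul_one_sub_rpow (a := m + 1/2) (b := ν + 1/2)
    (by positivity) (by linarith)
  have hsub := (intervalIntegrable_two_mul_smul_comp_sq_iff zero_le_one
    fun t : ℝ => t ^ ((m : ℝ) + 1/2 - 1) * (1 - t) ^ (ν + 1/2 - 1)).2 (by rwa [one_pow])
  refine (hsub.const_mul 2⁻¹).congr fun x hx => ?_
  rw [uIoc_of_le zero_le_one] at hx
  exact (pow_mul_one_sub_sq_rpow_eq hx.1 m ν).symm

lemma integral_zero_one_pow_mul_one_sub_sq_rpow (hν : -1/2 < ν) (m : ℕ) :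
    ∫ s in (0 : ℝ)..1, s ^ (2 * m) * (1 - s ^ 2) ^ (ν - 1/2) =
      2⁻¹ * (Gamma (m + 1/2) * Gamma (ν + 1/2) / Gamma (m + ν + 1)) := by
  have hsub := integral_two_mul_smul_comp_sq zero_le_one
    fun t : ℝ => t ^ ((m : ℝ) + 1/2 - 1) * (1 - t) ^ (ν + 1/2 - 1)
  simp only [smul_eq_mul, one_pow] at hsub
  rw [integral_congr_ae (.of_forall fun x hx => pow_mul_one_sub_sq_rpow_eq
      (by rw [uIoc_of_le zero_le_one] at hx; exact hx.1) m ν), intervalIntegral.integral_const_mul,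
    hsub, integral_rpow_mul_one_sub_rpow (by positivity) (by linarith),
    show (m : ℝ) + 1/2 + (ν + 1/2) = m + ν + 1 by ring]

lemma integral_pow_mul_one_sub_sq_rpow (hν : -1/2 < ν) (m : ℕ) :
    ∫ s in (-1 : ℝ)..1, s ^ (2 * m) * (1 - s ^ 2) ^ (ν - 1/2) =
      Gamma (m + 1/2) * Gamma (ν + 1/2) / Gamma (m + ν + 1) := by
  rw [integral_neg_self_eq_two_smul_of_even (fun x => by simp [pow_mul])
    (intervalIntegrable_pow_mul_one_sub_sq_rpow hν m),
    integral_zero_one_pow_mul_one_sub_sq_rpow hν m, smul_eq_mul, ← mul_assoc,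
    mul_inv_cancel₀ two_ne_zero, one_mul]

lemma integral_pow_odd_mul_one_sub_sq_rpow (ν : ℝ) (r : ℕ) :
    ∫ s in (-1 : ℝ)..1, s ^ (2 * r + 1) * (1 - s ^ 2) ^ (ν - 1/2) = 0 :=
  integral_neg_self_eq_zero_of_odd fun x => by simp [Odd.neg_pow ⟨r, rfl⟩]

end Moments

lemma hasSum_pow_div_factorial_exp (x : ℝ) : HasSum (fun n : ℕ => x ^ n / n !) (exp x) := by
  rw [exp_eq_exp_ℝ]
  exact NormedSpace.expSeries_div_hasSum_exp x

lemma hasSum_integral_exp_mul_mul {w : ℝ → ℝ} (hw : IntervalIntegrable w volume (-1) 1) (c : ℝ) :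
    HasSum (fun n : ℕ => c ^ n / n ! * ∫ s in (-1 : ℝ)..1, s ^ n * w s)
      (∫ s in (-1 : ℝ)..1, exp (c * s) * w s) := by
  simp only [← intervalIntegral.integral_const_mul]
  refine hasSum_integral_of_dominated_convergence (fun n s => |c| ^ n / n ! * |w s|)
    (fun n => ?_) (fun n => .of_forall fun s hs => ?_)
    (.of_forall fun s _ => (summable_pow_div_factorial |c|).mul_right _) ?_
    (.of_forall fun s _ => ?_)
  · exact (((continuous_pow n).aestronglyMeasurable.mul
      (intervalIntegrable_iff.1 hw).aestronglyMeasurable).const_mul _)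
  · rw [uIoc_of_le (by norm_num), mem_Ioc] at hs
    have hs1 : |s| ^ n ≤ 1 := pow_le_one₀ (abs_nonneg s) (abs_le.2 ⟨hs.1.le, hs.2⟩)
    simp only [norm_mul, norm_div, norm_pow, Real.norm_eq_abs, Nat.abs_cast]
    gcongr
    exact mul_le_of_le_one_left (abs_nonneg _) hs1
  · simp only [tsum_mul_right, (hasSum_pow_div_factorial_exp |c|).tsum_eq]
    exact hw.norm.const_mul _
  · refine ((hasSum_pow_div_factorial_exp (c * s)).mul_right (w s)).congr_fun fun n => ?_
    rw [mul_pow]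
    ring

lemma Gamma_nat_add_half_mul_factorial (m : ℕ) :
    Gamma (m + 1/2) * m ! = √π * (2 * m)! / 4 ^ m := by
  have h := Gamma_mul_Gamma_add_half (m + 1/2)
  rw [show (m : ℝ) + 1/2 + 1/2 = m + 1 by ring, Gamma_nat_eq_factorial,
    show 2 * ((m : ℝ) + 1/2) = ((2 * m : ℕ) : ℝ) + 1 by push_cast; ring, Gamma_nat_eq_factorial,
    show 1 - (((2 * m : ℕ) : ℝ) + 1) = -((2 * m : ℕ) : ℝ) by ring, rpow_neg zero_le_two,
    rpow_natCast, pow_mul] at h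
  rw [h]
  norm_num
  ring

lemma integral_exp_neg_mul_mul_one_sub_sq_rpow {ν : ℝ} (hν : -1/2 < ν) (c : ℝ) :
    ∫ s in (-1 : ℝ)..1, exp (-c * s) * (1 - s ^ 2) ^ (ν - 1/2) =
      √π * Gamma (ν + 1/2) * ∑' m : ℕ, (c / 2) ^ (2 * m) / (m ! * Gamma (m + ν + 1)) := by
  have hw₀ := intervalIntegrable_pow_mul_one_sub_sq_rpow hν 0
  simp only [mul_zero, pow_zero, one_mul] at hw₀
  have hw := (hw₀.neg_self_of_even fun s => by rw [neg_sq]).trans hw₀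
  have hodd : ∀ n ∉ range (fun m : ℕ => 2 * m),
      (-c) ^ n / n ! * ∫ s in (-1 : ℝ)..1, s ^ n * (1 - s ^ 2) ^ (ν - 1/2) = 0 := by
    intro n hn
    obtain ⟨r, rfl | rfl⟩ := Nat.even_or_odd' n
    · exact (hn ⟨r, rfl⟩).elim
    · rw [integral_pow_odd_mul_one_sub_sq_rpow, mul_zero]
  have hsum_even := ((mul_right_injective₀ two_ne_zero).hasSum_iff hodd).2
    (hasSum_integral_exp_mul_mul hw (-c))
  rw [← hsum_even.tsum_eq, ← tsum_mul_left]
  refine tsum_congr fun m => ?_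
  have hΓ := eq_div_of_mul_eq (by positivity) (Gamma_nat_add_half_mul_factorial m)
  have hΓν : Gamma (m + ν + 1) ≠ 0 :=
    (Gamma_pos_of_pos (by linarith [m.cast_nonneg (α := ℝ)])).ne'
  rw [Function.comp_apply, integral_pow_mul_one_sub_sq_rpow hν, hΓ,
    Even.neg_pow (even_two_mul m), div_pow, pow_mul, pow_mul]
  field_simp
  ring

lemma besselI_eq_rpow_mul_tsum (ν : ℝ) {z : ℝ} (hz : 0 < z) :
    besselI ν z = (z / 2) ^ ν * ∑' m : ℕ, (z / 2) ^ (2 * m) / (m ! * Gamma (m + ν + 1)) := by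
  rw [besselI, ← tsum_mul_left]
  refine tsum_congr fun k => ?_
  rw [rpow_add (by positivity), show 2 * (k : ℝ) = ((2 * k : ℕ) : ℝ) by push_cast; ring,
    rpow_natCast, Gamma_nat_eq_factorial, mul_div_assoc]

theorem schlafli_poisson (ν z : ℝ) (hν : -1/2 < ν) (hz : 0 < z) :
    besselI ν z = z ^ ν *
      (∫ s in (-1 : ℝ)..1, Real.exp (-z * s) * (1 - s ^ 2) ^ (ν - 1/2)) /
        (Real.sqrt Real.pi * 2 ^ ν * Real.Gamma (ν + 1/2)) := by
  have hΓ : Gamma (ν + 1/2) ≠ 0 := (Gamma_pos_of_pos (by linarith)).ne'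
  have hπ : √π ≠ 0 := (sqrt_pos.2 pi_pos).ne'
  rw [besselI_eq_rpow_mul_tsum ν hz, integral_exp_neg_mul_mul_one_sub_sq_rpow hν z,
    div_rpow hz.le zero_le_two]
  -- keeps `field_simp` from rewriting `ν + 1/2` inside `Gamma`
  generalize Gamma (ν + 1/2) = G at hΓ ⊢
  field_simp
end

section
/- Let b ≥ 0, c > 0. Then for all x, y > 0, s ∈ [-1,1], and ζ ∈ (0,1): x^b · exp(-c q₊(x,y,s)/ζ - c ζ q₋(x,y,s)) ≤ C ζ^{-b/2}, where q_±(x,y,s) = x² + y² ± 2xys and C depends only on b, c. -/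
/-!
Since `q₊ ≥ 0` and `ζ ≤ 1/ζ`, the exponent is at most `-c ζ (q₊ + q₋) ≤ -2 c ζ x²`.
With `u = √ζ x` we get `x^b e^{-2cζx²} = ζ^{-b/2} u^b e^{-2cu²}`, and `u ↦ u^b e^{-2cu²}` is
bounded on `[0, ∞)` because a polynomial is dominated by the exponential.
-/

open Real Set

lemma rpow_le_one_add_pow {u b : ℝ} {n : ℕ} (hu : 0 ≤ u) (hb : 0 ≤ b) (hbn : b ≤ n) :
    u ^ b ≤ 1 + u ^ n := by
  rcases le_total u 1 with hu1 | hu1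
  · linarith [rpow_le_one hu hu1 hb, pow_nonneg hu n]
  · calc u ^ b ≤ u ^ (n : ℝ) := rpow_le_rpow_of_exponent_le hu1 hbn
      _ = u ^ n := rpow_natCast u n
      _ ≤ 1 + u ^ n := le_add_of_nonneg_left zero_le_one

lemma pow_mul_exp_neg_mul_le {a t : ℝ} (ha : 0 < a) (ht : 0 ≤ t) (n : ℕ) :
    t ^ n * exp (-a * t) ≤ n.factorial / a ^ n := by
  have h := pow_div_factorial_le_exp (a * t) (mul_nonneg ha.le ht) n
  rw [div_le_iff₀ (by positivity)] at h
  rw [le_div_iff₀ (by positivity), neg_mul, exp_neg, ← div_eq_mul_inv,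
    div_mul_eq_mul_div, div_le_iff₀ (exp_pos _)]
  linarith [mul_pow a t n]

lemma exists_rpow_mul_exp_neg_mul_sq_le {a b : ℝ} (ha : 0 < a) (hb : 0 ≤ b) :
    ∃ C : ℝ, 0 < C ∧ ∀ u : ℝ, 0 ≤ u → u ^ b * exp (-a * u ^ 2) ≤ C := by
  set n := ⌈b / 2⌉₊
  refine ⟨1 + n.factorial / a ^ n, by positivity, fun u hu => ?_⟩
  have hbn : b ≤ (2 * n : ℕ) := by push_cast; linarith [Nat.le_ceil (b / 2)]
  have hexp_le_one : exp (-a * u ^ 2) ≤ 1 := exp_le_one_iff.2 (by nlinarith)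
  calc u ^ b * exp (-a * u ^ 2) ≤ (1 + (u ^ 2) ^ n) * exp (-a * u ^ 2) := by
        rw [← pow_mul]; gcongr; exact rpow_le_one_add_pow hu hb hbn
    _ = exp (-a * u ^ 2) + (u ^ 2) ^ n * exp (-a * u ^ 2) := by ring
    _ ≤ 1 + n.factorial / a ^ n := by
        gcongr; exact pow_mul_exp_neg_mul_le ha (sq_nonneg u) n

lemma sq_add_sq_add_two_mul_mul_nonneg (x y : ℝ) {s : ℝ} (hs : s ∈ Icc (-1 : ℝ) 1) :
    0 ≤ x ^ 2 + y ^ 2 + 2 * x * y * s := by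
  -- `x² + y² + 2xys = (x + sy)² + (1 + s)(1 - s) y²`
  nlinarith [sq_nonneg (x + s * y),
    mul_nonneg (mul_nonneg (neg_le_iff_add_nonneg'.1 hs.1) (sub_nonneg.2 hs.2)) (sq_nonneg y)]

lemma neg_div_sub_mul_le_neg_two_mul_sq {c x y s ζ : ℝ} (hc : 0 ≤ c) (hs : s ∈ Icc (-1 : ℝ) 1)
    (hζ : ζ ∈ Ioc 0 1) :
    -c * (x ^ 2 + y ^ 2 + 2 * x * y * s) / ζ - c * ζ * (x ^ 2 + y ^ 2 - 2 * x * y * s)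
      ≤ -(2 * c) * (ζ * x ^ 2) := by
  obtain ⟨hζ0, hζ1⟩ := hζ
  have hqp : 0 ≤ c * (x ^ 2 + y ^ 2 + 2 * x * y * s) :=
    mul_nonneg hc (sq_add_sq_add_two_mul_mul_nonneg x y hs)
  have hζqp : c * ζ * (x ^ 2 + y ^ 2 + 2 * x * y * s)
      ≤ c * (x ^ 2 + y ^ 2 + 2 * x * y * s) / ζ := by
    rw [le_div_iff₀ hζ0]
    nlinarith [mul_le_mul_of_nonneg_left (mul_le_one₀ hζ1 hζ0.le hζ1) hqp]
  calc _ = -(c * (x ^ 2 + y ^ 2 + 2 * x * y * s) / ζ)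
          - c * ζ * (x ^ 2 + y ^ 2 - 2 * x * y * s) := by ring
    _ ≤ -(c * ζ * (x ^ 2 + y ^ 2 + 2 * x * y * s))
          - c * ζ * (x ^ 2 + y ^ 2 - 2 * x * y * s) := by linarith
    _ = -(2 * c) * (ζ * x ^ 2) - 2 * (c * ζ * y ^ 2) := by ring
    _ ≤ -(2 * c) * (ζ * x ^ 2) := by linarith [mul_nonneg (mul_nonneg hc hζ0.le) (sq_nonneg y)]

lemma rpow_mul_exp_neg_mul_scale {a b x ζ : ℝ} (hx : 0 ≤ x) (hζ : 0 < ζ) :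
    x ^ b * exp (-a * (ζ * x ^ 2))
      = ζ ^ (-b / 2) * ((√ζ * x) ^ b * exp (-a * (√ζ * x) ^ 2)) := by
  have hscale : ζ ^ (-b / 2) * √ζ ^ b = 1 := by
    rw [sqrt_eq_rpow, ← rpow_mul hζ.le, ← rpow_add hζ, neg_div, one_div_mul_eq_div,
      neg_add_cancel, rpow_zero]
  rw [mul_rpow (sqrt_nonneg ζ) hx, mul_pow, sq_sqrt hζ.le]
  linear_combination -(x ^ b * exp (-a * (ζ * x ^ 2))) * hscale

theorem lemma_c (b c : ℝ) (hb : 0 ≤ b) (hc : 0 < c) :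
    ∃ C : ℝ, 0 < C ∧ ∀ x y s ζ : ℝ, 0 < x → 0 < y →
      s ∈ Set.Icc (-1 : ℝ) 1 → ζ ∈ Set.Ioo (0 : ℝ) 1 →
      x ^ b * Real.exp (-c * (x ^ 2 + y ^ 2 + 2 * x * y * s) / ζ
          - c * ζ * (x ^ 2 + y ^ 2 - 2 * x * y * s))
        ≤ C * ζ ^ (-b / 2) := by
  obtain ⟨C, hC, hbound⟩ := exists_rpow_mul_exp_neg_mul_sq_le (mul_pos two_pos hc) hb
  refine ⟨C, hC, fun x y s ζ hx _ hs hζ => ?_⟩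
  calc _ ≤ x ^ b * exp (-(2 * c) * (ζ * x ^ 2)) := by
        gcongr; exact neg_div_sub_mul_le_neg_two_mul_sq hc.le hs (Ioo_subset_Ioc_self hζ)
    _ = ζ ^ (-b / 2) * ((√ζ * x) ^ b * exp (-(2 * c) * (√ζ * x) ^ 2)) :=
        rpow_mul_exp_neg_mul_scale hx.le hζ.1
    _ ≤ C * ζ ^ (-b / 2) := by
        rw [mul_comm]
        exact mul_le_mul_of_nonneg_right (hbound _ (by positivity)) (rpow_nonneg hζ.1.le _)
end
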